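/- Under the elliptical potential setting, for any a > 0, the number N of indices m with n_m ≥ 1 and ‖c_m‖_{V_m⁻¹} ≥ a satisfies N ≤ (2·d/a²)·log(1 + τ/(λ·d)). -/

import Mathlib

/-!
Each update multiplies `det V` by `1 + n_m ‖c_m‖²_{V_m⁻¹}` (matrix determinant lemma), while
`trace V_{M+1} ≤ λ d + τ`. AM–GM on the eigenvalues gives `det V_{M+1} ≤ (trace V_{M+1} / d) ^ d`,
hence `∏ m, (1 + n_m ‖c_m‖²_{V_m⁻¹}) ≤ (1 + τ / (λ d)) ^ d`. Since `log (1 + x) ≥ x / 2` on `[0, 1]`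
and `n_m ‖c_m‖²_{V_m⁻¹} ≤ 1`, every counted index contributes at least `a² / 2` to the logarithm
of the product.
-/

open Finset Matrix

theorem Real.prod_le_sum_div_card_pow {ι : Type*} (s : Finset ι) {z : ι → ℝ}
    (hz : ∀ i ∈ s, 0 ≤ z i) : ∏ i ∈ s, z i ≤ ((∑ i ∈ s, z i) / #s) ^ #s := by
  rcases s.eq_empty_or_nonempty with rfl | hs
  · simp
  have amgm := Real.geom_mean_le_arith_mean s (fun _ => 1) z (fun _ _ => zero_le_one)
    (by simpa using hs.card_pos) hz
  simp only [Real.rpow_one, one_mul, sum_const, nsmul_eq_mul, mul_one] at amgm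
  calc ∏ i ∈ s, z i = ((∏ i ∈ s, z i) ^ (#s : ℝ)⁻¹) ^ #s :=
        (Real.rpow_inv_natCast_pow (prod_nonneg hz) hs.card_pos.ne').symm
    _ ≤ _ := pow_le_pow_left₀ (Real.rpow_nonneg (prod_nonneg hz) _) amgm _

theorem Real.div_two_le_log_one_add {t : ℝ} (h0 : 0 ≤ t) (h1 : t ≤ 1) :
    t / 2 ≤ Real.log (1 + t) := by
  calc t / 2 ≤ 1 - (1 + t)⁻¹ := by
        rw [le_sub_iff_add_le, ← le_sub_iff_add_le', inv_le_iff_one_le_mul₀ (by linarith)]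
        nlinarith
    _ ≤ Real.log (1 + t) := Real.one_sub_inv_le_log_of_pos (by linarith)

theorem card_filter_mul_le_two_mul_log_prod {α : Type*} (s : Finset α) (p : α → Prop)
    [DecidablePred p] {x : α → ℝ} {b : ℝ} (hx0 : ∀ k ∈ s, 0 ≤ x k) (hx1 : ∀ k ∈ s, x k ≤ 1)
    (hb : ∀ k ∈ s, p k → b ≤ x k) :
    #(s.filter p) * b ≤ 2 * Real.log (∏ k ∈ s, (1 + x k)) := by
  have hlog0 : ∀ k ∈ s, 0 ≤ Real.log (1 + x k) := fun k hk =>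
    Real.log_nonneg (by linarith [hx0 k hk])
  rw [Real.log_prod fun k hk => by linarith [hx0 k hk]]
  calc #(s.filter p) * b = 2 * ∑ _k ∈ s.filter p, (b / 2 : ℝ) := by
        rw [sum_const, nsmul_eq_mul]; ring
    _ ≤ 2 * ∑ k ∈ s.filter p, Real.log (1 + x k) := by
        gcongr with k hk
        obtain ⟨hks, hpk⟩ := mem_filter.mp hk
        exact (div_le_div_of_nonneg_right (hb k hks hpk) two_pos.le).trans
          (Real.div_two_le_log_one_add (hx0 k hks) (hx1 k hks))
    _ ≤ 2 * ∑ k ∈ s, Real.log (1 + x k) := by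
        gcongr 2 * ?_
        exact sum_le_sum_of_subset_of_nonneg (filter_subset p s) fun k hk _ => hlog0 k hk

namespace Matrix

variable {ι : Type*} [Fintype ι]

theorem posSemidef_smul_vecMulVec_self {r : ℝ} (hr : 0 ≤ r) (v : ι → ℝ) :
    (r • vecMulVec v v).PosSemidef := by
  simpa using (posSemidef_vecMulVec_self_star v).smul hr

variable [DecidableEq ι]

theorem PosSemidef.det_le_trace_div_card_pow {A : Matrix ι ι ℝ} (hA : A.PosSemidef) :
    A.det ≤ (A.trace / Fintype.card ι) ^ Fintype.card ι := by
  rw [hA.isHermitian.det_eq_prod_eigenvalues, hA.isHermitian.trace_eq_sum_eigenvalues]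
  simpa using Real.prod_le_sum_div_card_pow univ fun i _ => hA.eigenvalues_nonneg i

theorem det_add_vecMulVec {R : Type*} [CommRing R] {A : Matrix ι ι R} (hA : IsUnit A.det)
    (u v : ι → R) : (A + vecMulVec u v).det = A.det * (1 + v ⬝ᵥ A⁻¹ *ᵥ u) := by
  rw [vecMulVec_eq Unit, det_add_replicateCol_mul_replicateRow hA, ← replicateRow_vecMul,
    replicateRow_mul_replicateCol, det_unique (n := Unit)]
  simp [dotProduct_mulVec]

end Matrix

section RankOneUpdates

variable {ι : Type*} [Fintype ι] {M : ℕ} {r : ℕ → ℝ} {u : ℕ → ι → ℝ}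
  {V : ℕ → Matrix ι ι ℝ}

theorem posDef_of_rankOne_updates (h1 : (V 1).PosDef) (hr : ∀ m, 0 ≤ r m)
    (hrec : ∀ m, 1 ≤ m → m ≤ M → V (m + 1) = V m + r m • vecMulVec (u m) (u m)) :
    ∀ m, 1 ≤ m → m ≤ M + 1 → (V m).PosDef := by
  intro m hm1 hmM
  induction m, hm1 using Nat.le_induction with
  | base => exact h1
  | succ m hm ih =>
    rw [hrec m hm (by omega)]
    exact (ih (by omega)).add_posSemidef (posSemidef_smul_vecMulVec_self (hr m) (u m))

theorem det_of_rankOne_updates [DecidableEq ι] (hV : ∀ m, 1 ≤ m → m ≤ M → IsUnit (V m).det)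
    (hrec : ∀ m, 1 ≤ m → m ≤ M → V (m + 1) = V m + r m • vecMulVec (u m) (u m)) :
    (V (M + 1)).det = (V 1).det * ∏ m ∈ Icc 1 M, (1 + r m * (u m ⬝ᵥ (V m)⁻¹ *ᵥ u m)) := by
  induction M with
  | zero => simp
  | succ M ih =>
    rw [hrec (M + 1) (by omega) le_rfl, ← smul_vecMulVec,
      det_add_vecMulVec (hV _ (by omega) le_rfl),
      ih (fun m h1 _ => hV m h1 (by omega)) (fun m h1 _ => hrec m h1 (by omega)),
      prod_Icc_succ_top (by omega), mulVec_smul, dotProduct_smul, smul_eq_mul, mul_assoc]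

theorem trace_of_rankOne_updates
    (hrec : ∀ m, 1 ≤ m → m ≤ M → V (m + 1) = V m + r m • vecMulVec (u m) (u m)) :
    (V (M + 1)).trace = (V 1).trace + ∑ m ∈ Icc 1 M, r m * (u m ⬝ᵥ u m) := by
  induction M with
  | zero => simp
  | succ M ih =>
    rw [hrec (M + 1) (by omega) le_rfl, trace_add, trace_smul, trace_vecMulVec,
      ih (fun m h1 _ => hrec m h1 (by omega)), sum_Icc_succ_top (by omega), smul_eq_mul,
      add_assoc]

theorem prod_one_add_le_of_rankOne_updates [DecidableEq ι] {lam : ℝ} (hlam : 0 < lam)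
    (hr : ∀ m, 0 ≤ r m) (hu : ∀ m, 1 ≤ m → m ≤ M → u m ⬝ᵥ u m ≤ 1) (hV1 : V 1 = lam • 1)
    (hrec : ∀ m, 1 ≤ m → m ≤ M → V (m + 1) = V m + r m • vecMulVec (u m) (u m)) :
    ∏ m ∈ Icc 1 M, (1 + r m * (u m ⬝ᵥ (V m)⁻¹ *ᵥ u m)) ≤
      (1 + (∑ m ∈ Icc 1 M, r m) / (lam * Fintype.card ι)) ^ Fintype.card ι := by
  set k := Fintype.card ι
  set S := ∑ m ∈ Icc 1 M, r m
  have hpd := posDef_of_rankOne_updates (by rw [hV1]; exact PosDef.one.smul hlam) hr hrec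
  have htrace : (V (M + 1)).trace ≤ lam * k + S := by
    rw [trace_of_rankOne_updates hrec, hV1, trace_smul, trace_one, smul_eq_mul]
    exact add_le_add le_rfl (sum_le_sum fun m hm =>
      mul_le_of_le_one_right (hr m) (hu m (mem_Icc.mp hm).1 (mem_Icc.mp hm).2))
  have hmean : (V (M + 1)).trace / k ≤ lam * (1 + S / (lam * k)) := by
    rcases k.eq_zero_or_pos with hk | hk
    · simpa [hk] using hlam.le
    rw [div_le_iff₀ (by positivity)]
    field_simp
    linarith
  have hdet :=
    det_of_rankOne_updates (fun m h1 _ => (hpd m h1 (by omega)).det_pos.ne'.isUnit) hrec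
  rw [hV1, det_smul, det_one, mul_one] at hdet
  refine le_of_mul_le_mul_left ?_ (pow_pos hlam k)
  rw [← hdet, ← mul_pow]
  have hpsd := (hpd (M + 1) (by omega) le_rfl).posSemidef
  exact hpsd.det_le_trace_div_card_pow.trans
    (pow_le_pow_left₀ (div_nonneg hpsd.trace_nonneg k.cast_nonneg) hmean k)

end RankOneUpdates

theorem elliptical_potential_count_general {d M : ℕ} (lam : ℝ) (hlam : 1 ≤ lam)
    (c : ℕ → Fin d → ℝ) (n : ℕ → ℕ)
    (V : ℕ → Matrix (Fin d) (Fin d) ℝ)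
    (hc : ∀ m, 1 ≤ m → m ≤ M → Real.sqrt (∑ k, c m k ^ 2) ≤ 1)
    (hV1 : V 1 = lam • (1 : Matrix (Fin d) (Fin d) ℝ))
    (hVrec : ∀ m, 1 ≤ m → m ≤ M →
      V (m + 1) = V m + (n m : ℝ) • vecMulVec (c m) (c m))
    (hsmall : ∀ m, 1 ≤ m → m ≤ M →
      (n m : ℝ) * (c m ⬝ᵥ (V m)⁻¹.mulVec (c m)) ≤ 1)
    (a : ℝ) (ha : 0 < a) :
    (((Finset.Icc 1 M).filter (fun m =>
        1 ≤ n m ∧ a ≤ Real.sqrt (c m ⬝ᵥ (V m)⁻¹.mulVec (c m)))).card : ℝ) ≤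
      (2 * d / a ^ 2) *
        Real.log (1 + ((∑ m ∈ Finset.Icc 1 M, n m : ℕ) : ℝ) / (lam * d)) := by
  have hlam0 : 0 < lam := by linarith
  have hpd := posDef_of_rankOne_updates (by rw [hV1]; exact PosDef.one.smul hlam0)
    (fun m => (n m).cast_nonneg) hVrec
  have hw0 : ∀ m ∈ Icc 1 M, 0 ≤ c m ⬝ᵥ (V m)⁻¹ *ᵥ c m := fun m hm => by
    obtain ⟨h1, h2⟩ := mem_Icc.mp hm
    exact (hpd m h1 (by omega)).inv.posSemidef.dotProduct_mulVec_nonneg _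
  have hprod := prod_one_add_le_of_rankOne_updates hlam0 (fun m => (n m).cast_nonneg)
    (fun m h1 h2 => by simpa [dotProduct, ← sq] using hc m h1 h2) hV1 hVrec
  rw [Fintype.card_fin, ← Nat.cast_sum] at hprod
  have hcount := card_filter_mul_le_two_mul_log_prod (Icc 1 M)
    (fun m => 1 ≤ n m ∧ a ≤ Real.sqrt (c m ⬝ᵥ (V m)⁻¹.mulVec (c m)))
    (fun m hm => mul_nonneg (n m).cast_nonneg (hw0 m hm))
    (fun m hm => hsmall m (mem_Icc.mp hm).1 (mem_Icc.mp hm).2) (b := a ^ 2)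
    fun m hm ⟨hn, haw⟩ => ((Real.le_sqrt' ha).mp haw).trans
      (le_mul_of_one_le_left (hw0 m hm) (by exact_mod_cast hn))
  rw [div_mul_eq_mul_div, le_div_iff₀ (by positivity)]
  calc _ ≤ 2 * Real.log (∏ m ∈ Icc 1 M, (1 + n m * (c m ⬝ᵥ (V m)⁻¹ *ᵥ c m))) := hcount
    _ ≤ 2 * Real.log ((1 + ((∑ m ∈ Icc 1 M, n m : ℕ) : ℝ) / (lam * d)) ^ d) := by
        gcongr
        exact prod_pos fun m hm => by linarith [mul_nonneg (n m).cast_nonneg (hw0 m hm)]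
    _ = _ := by rw [Real.log_pow]; ring

/-- Elliptical potential counting lemma: for any `a > 0`, the number of indices `m` with
`n_m ≥ 1` and `‖c_m‖_{V_m⁻¹} ≥ a` is at most `(2d/a²) log (1 + τ/(λ d))`. -/
theorem elliptical_potential_count {d M : ℕ} (hd : 1 ≤ d) (lam : ℝ) (hlam : 1 ≤ lam)
    (c : ℕ → Fin d → ℝ) (n : ℕ → ℕ)
    (V : ℕ → Matrix (Fin d) (Fin d) ℝ)
    (hc : ∀ m, 1 ≤ m → m ≤ M → Real.sqrt (∑ k, c m k ^ 2) ≤ 1)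
    (hV1 : V 1 = lam • (1 : Matrix (Fin d) (Fin d) ℝ))
    (hVrec : ∀ m, 1 ≤ m → m ≤ M →
      V (m + 1) = V m + (n m : ℝ) • vecMulVec (c m) (c m))
    (hsmall : ∀ m, 1 ≤ m → m ≤ M →
      (n m : ℝ) * (c m ⬝ᵥ (V m)⁻¹.mulVec (c m)) ≤ 1)
    (a : ℝ) (ha : 0 < a) :
    (((Finset.Icc 1 M).filter (fun m =>
        1 ≤ n m ∧ a ≤ Real.sqrt (c m ⬝ᵥ (V m)⁻¹.mulVec (c m)))).card : ℝ) ≤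
      (2 * d / a ^ 2) *
        Real.log (1 + ((∑ m ∈ Finset.Icc 1 M, n m : ℕ) : ℝ) / (lam * d)) :=
  elliptical_potential_count_general lam hlam c n V hc hV1 hVrec hsmall a ha
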